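/- Feynman parameterization: let n ≥ 2 and let a₁, …, a_n be positive real numbers. Then 1/(a₁·a₂·⋯·a_n) = (n−1)! · ∫_T ( Σ_{i=1}^{n−1} a_i x_i + a_n·(1 − Σ_{i=1}^{n−1} x_i) )^{−n} dx, where the integral is over the simplex T = { x ∈ ℝ^{n−1} : x_i ≥ 0 for all i and Σ_{i=1}^{n−1} x_i ≤ 1 } with respect to (n−1)-dimensional Lebesgue measure. -/

import Mathlib

/-!
Induction on the number `n` of coefficients (the simplex has dimension `n - 1`), integrating out
its first coordinate `t`. Write `a = (u, m, v)` with `u = a₁`, `v = a_n` and suppose `u ≠ v`.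
Along `t` the integrand is `(A + (u - v) t)^{-n}`, where `A` is the weighted mean of `(m, v)` at
the remaining coordinates `y`; at the upper end `t = 1 - ∑ y` it becomes `B^{-n}`, with `B` the
weighted mean of `(m, u)`. So the inner integral is the divided difference
`(A^{1-n} - B^{1-n}) / ((n-1)(u - v))` of two integrands of the same shape in one dimension less,
and the induction hypothesis turns the right side into
`(1/(∏m · v) - 1/(∏m · u)) / (u - v) = 1/(u · ∏m · v)`. Permuting the coordinates preserves the
simplex, so any coefficient other than `a_n` can be moved to the front; if there is none, the
integrand is constant and the formula reduces to `vol T = 1/(n-1)!`.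
-/

open MeasureTheory Finset

lemma integral_Icc_sub_pow {c : ℝ} (hc : 0 ≤ c) (m : ℕ) :
    ∫ t in Set.Icc 0 c, (c - t) ^ m = c ^ (m + 1) / (m + 1) := by
  rw [integral_Icc_eq_integral_Ioc, ← intervalIntegral.integral_of_le hc,
    intervalIntegral.integral_comp_sub_left (fun x => x ^ m) c]
  simp [integral_pow]

lemma integral_Icc_add_mul_zpow {A b c : ℝ} (hA : 0 < A) (hAc : 0 < A + b * c) (hb : b ≠ 0)
    (hc : 0 ≤ c) {q : ℤ} (hq : q ≠ -1) :
    ∫ t in Set.Icc 0 c, (A + b * t) ^ q = ((A + b * c) ^ (q + 1) - A ^ (q + 1)) / ((q + 1) * b) := by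
  have hzero : (0 : ℝ) ∉ Set.uIcc (b * 0 + A) (b * c + A) := fun h =>
    (Set.mem_uIcc.1 h).elim (fun h => h.1.not_gt (by linarith)) (fun h => h.1.not_gt (by linarith))
  have hq' : (q + 1 : ℝ) ≠ 0 := by exact_mod_cast fun h => hq (by omega)
  rw [integral_Icc_eq_integral_Ioc, ← intervalIntegral.integral_of_le hc]
  simp_rw [add_comm A]
  rw [intervalIntegral.integral_comp_mul_add (fun x => x ^ q) hb,
    integral_zpow (Or.inr ⟨hq, hzero⟩)]
  rw [mul_zero, zero_add, smul_eq_mul, add_comm (b * c)]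
  field_simp

namespace Feynman

open scoped Nat

def simplex (n : ℕ) : Set (Fin n → ℝ) := {x | (∀ i, 0 ≤ x i) ∧ ∑ i, x i ≤ 1}

noncomputable def weightedMean {n : ℕ} (a : Fin (n + 1) → ℝ) (x : Fin n → ℝ) : ℝ :=
  (∑ i : Fin n, a i.castSucc * x i) + a (Fin.last n) * (1 - ∑ i, x i)

noncomputable def feynmanIntegral {n : ℕ} (a : Fin (n + 1) → ℝ) : ℝ :=
  ∫ x in simplex n, weightedMean a x ^ (-(n + 1 : ℤ))

lemma isClosed_simplex (n : ℕ) : IsClosed (simplex n) := by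
  simp only [simplex, Set.ofPred_and, Set.ofPred_forall]
  exact (isClosed_iInter fun i => isClosed_le continuous_const (continuous_apply i)).inter
    (isClosed_le (continuous_finsetSum _ fun i _ => continuous_apply i) continuous_const)

lemma simplex_subset_pi_Icc (n : ℕ) : simplex n ⊆ Set.univ.pi fun _ => Set.Icc 0 1 :=
  fun _ ⟨h0, h1⟩ i _ => ⟨h0 i, (single_le_sum (fun j _ => h0 j) (mem_univ i)).trans h1⟩

lemma isCompact_simplex (n : ℕ) : IsCompact (simplex n) :=
  (isCompact_univ_pi fun _ => isCompact_Icc).of_isClosed_subset (isClosed_simplex n)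
    (simplex_subset_pi_Icc n)

lemma one_sub_sum_nonneg {n : ℕ} {x : Fin n → ℝ} (hx : x ∈ simplex n) : 0 ≤ 1 - ∑ i, x i :=
  sub_nonneg.2 hx.2

lemma simplex_zero : simplex 0 = Set.univ := by
  ext x; simp [simplex]

lemma setIntegral_simplex_zero (f : (Fin 0 → ℝ) → ℝ) : ∫ x in simplex 0, f x = f 0 := by
  rw [simplex_zero, Measure.restrict_univ, Measure.volume_pi_eq_dirac 0, integral_dirac]

lemma cons_mem_simplex_iff {n : ℕ} {t : ℝ} {y : Fin n → ℝ} :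
    (Fin.cons t y : Fin (n + 1) → ℝ) ∈ simplex (n + 1) ↔
      y ∈ simplex n ∧ t ∈ Set.Icc 0 (1 - ∑ i, y i) := by
  simp only [simplex, Set.mem_ofPred_eq, Fin.forall_fin_succ, Fin.cons_zero, Fin.cons_succ,
    Fin.sum_cons, Set.mem_Icc]
  constructor
  · rintro ⟨⟨ht, hy⟩, hs⟩
    exact ⟨⟨hy, by linarith⟩, ht, by linarith⟩
  · rintro ⟨⟨hy, _⟩, ht, hts⟩
    exact ⟨⟨ht, hy⟩, by linarith⟩

lemma integral_indicator_simplex_cons {n : ℕ} (f : (Fin (n + 1) → ℝ) → ℝ) (y : Fin n → ℝ) :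
    ∫ t, (simplex (n + 1)).indicator f (Fin.cons t y) =
      (simplex n).indicator (fun y => ∫ t in Set.Icc 0 (1 - ∑ i, y i), f (Fin.cons t y)) y := by
  by_cases hy : y ∈ simplex n
  · rw [Set.indicator_of_mem hy, ← integral_indicator measurableSet_Icc]
    congr 1 with t
    by_cases ht : t ∈ Set.Icc 0 (1 - ∑ i, y i)
    · rw [Set.indicator_of_mem (cons_mem_simplex_iff.2 ⟨hy, ht⟩), Set.indicator_of_mem ht]
    · rw [Set.indicator_of_notMem (fun h => ht (cons_mem_simplex_iff.1 h).2),
        Set.indicator_of_notMem ht]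
  · simp [cons_mem_simplex_iff, hy]

lemma setIntegral_simplex_succ {n : ℕ} {f : (Fin (n + 1) → ℝ) → ℝ}
    (hf : IntegrableOn f (simplex (n + 1))) :
    ∫ x in simplex (n + 1), f x =
      ∫ y in simplex n, ∫ t in Set.Icc 0 (1 - ∑ i, y i), f (Fin.cons t y) := by
  have hcons := (volume_preserving_piFinSuccAbove (fun _ : Fin (n + 1) => ℝ) 0).symm
  have hcons_apply : ∀ p : ℝ × (Fin n → ℝ),
      (MeasurableEquiv.piFinSuccAbove (fun _ => ℝ) 0).symm p = Fin.cons p.1 p.2 := fun _ => by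
    simp [MeasurableEquiv.piFinSuccAbove_symm_apply, Fin.consEquiv]
  have hint := (hcons.integrable_comp_emb (MeasurableEquiv.measurableEmbedding _)).2
    ((integrable_indicator_iff (isClosed_simplex _).measurableSet).2 hf)
  simp only [Function.comp_def, hcons_apply] at hint
  rw [Measure.volume_eq_prod] at hint
  rw [← integral_indicator (isClosed_simplex _).measurableSet, ← hcons.integral_comp',
    ← integral_indicator (isClosed_simplex _).measurableSet, Measure.volume_eq_prod]
  simp only [hcons_apply]
  rw [integral_prod_symm _ hint]
  simp only [integral_indicator_simplex_cons]

lemma comp_perm_mem_simplex_iff {n : ℕ} (π : Equiv.Perm (Fin n)) {x : Fin n → ℝ} :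
    x ∘ π ∈ simplex n ↔ x ∈ simplex n := by
  simp only [simplex, Set.mem_ofPred_eq, Function.comp_apply, Equiv.sum_comp π x]
  exact and_congr_left' ⟨fun h i => π.apply_symm_apply i ▸ h (π.symm i), fun h i => h (π i)⟩

lemma setIntegral_simplex_comp_perm {n : ℕ} (f : (Fin n → ℝ) → ℝ) (π : Equiv.Perm (Fin n)) :
    ∫ x in simplex n, f (x ∘ π) = ∫ x in simplex n, f x := by
  have hπ := volume_preserving_arrowCongr' π.symm (MeasurableEquiv.refl ℝ) (.id _)
  have hpre : MeasurableEquiv.arrowCongr' π.symm (MeasurableEquiv.refl ℝ) ⁻¹' simplex n =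
      simplex n := by
    ext x; exact comp_perm_mem_simplex_iff π
  have hchange := hπ.setIntegral_preimage_emb (MeasurableEquiv.measurableEmbedding _) f (simplex n)
  rwa [hpre] at hchange

lemma integral_simplex_one_sub_sum_pow (n m : ℕ) :
    ∫ x in simplex n, (1 - ∑ i, x i) ^ m = (m ! : ℝ) / (m + n)! := by
  induction n generalizing m with
  | zero => rw [setIntegral_simplex_zero]; simp [m.factorial_ne_zero]
  | succ n ih =>
    have hint : IntegrableOn (fun x : Fin (n + 1) → ℝ => (1 - ∑ i, x i) ^ m) (simplex (n + 1)) :=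
      (by fun_prop : Continuous _).continuousOn.integrableOn_compact (isCompact_simplex _)
    rw [setIntegral_simplex_succ hint]
    calc _ = ∫ y in simplex n, (1 - ∑ i, y i) ^ (m + 1) / (m + 1) := by
          refine setIntegral_congr_fun (isClosed_simplex n).measurableSet fun y hy => ?_
          simp only [Fin.sum_cons, sub_add_eq_sub_sub_swap]
          exact integral_Icc_sub_pow (one_sub_sum_nonneg hy) m
      _ = (m ! : ℝ) / (m + (n + 1))! := by
          rw [integral_div, ih, ← add_assoc, add_right_comm, Nat.factorial_succ m]
          push_cast
          field_simp

lemma measureReal_simplex (n : ℕ) : volume.real (simplex n) = (n ! : ℝ)⁻¹ := by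
  simpa using integral_simplex_one_sub_sum_pow n 0

@[simp]
lemma weightedMean_snoc {n : ℕ} (c : Fin n → ℝ) (v : ℝ) (x : Fin n → ℝ) :
    weightedMean (Fin.snoc c v : Fin (n + 1) → ℝ) x = ∑ i, c i * x i + v * (1 - ∑ i, x i) := by
  simp [weightedMean]

lemma continuous_weightedMean {n : ℕ} (a : Fin (n + 1) → ℝ) : Continuous (weightedMean a) := by
  unfold weightedMean; fun_prop

lemma le_weightedMean {n : ℕ} {a : Fin (n + 1) → ℝ} {r : ℝ} (hr : ∀ i, r ≤ a i)
    {x : Fin n → ℝ} (hx : x ∈ simplex n) : r ≤ weightedMean a x :=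
  calc r = ∑ i, r * x i + r * (1 - ∑ i, x i) := by rw [← mul_sum]; ring
    _ ≤ weightedMean a x :=
      add_le_add (sum_le_sum fun i _ => mul_le_mul_of_nonneg_right (hr _) (hx.1 i))
        (mul_le_mul_of_nonneg_right (hr _) (one_sub_sum_nonneg hx))

lemma weightedMean_pos {n : ℕ} {a : Fin (n + 1) → ℝ} (ha : ∀ i, 0 < a i)
    {x : Fin n → ℝ} (hx : x ∈ simplex n) : 0 < weightedMean a x :=
  ((lt_inf'_iff univ_nonempty).2 fun i _ => ha i).trans_le
    (le_weightedMean (fun i => inf'_le a (mem_univ i)) hx)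

lemma integrableOn_weightedMean_zpow {n : ℕ} {a : Fin (n + 1) → ℝ} (ha : ∀ i, 0 < a i)
    (q : ℤ) : IntegrableOn (fun x => weightedMean a x ^ q) (simplex n) :=
  ((continuous_weightedMean a).continuousOn.zpow₀ q
    fun _ hx => .inl (weightedMean_pos ha hx).ne').integrableOn_compact (isCompact_simplex n)


lemma weightedMean_snoc_comp_perm {n : ℕ} (c : Fin n → ℝ) (v : ℝ) (π : Equiv.Perm (Fin n))
    (x : Fin n → ℝ) :
    weightedMean (Fin.snoc (c ∘ π) v : Fin (n + 1) → ℝ) x =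
      weightedMean (Fin.snoc c v : Fin (n + 1) → ℝ) (x ∘ π.symm) := by
  simp only [weightedMean_snoc, Function.comp_apply, Equiv.sum_comp π.symm x]
  congr 1
  simpa using Equiv.sum_comp π fun i => c i * x (π.symm i)

lemma weightedMean_cons_snoc {n : ℕ} (u v t : ℝ) (m y : Fin n → ℝ) :
    weightedMean (Fin.cons u (Fin.snoc m v) : Fin (n + 2) → ℝ) (Fin.cons t y) =
      weightedMean (Fin.snoc m v : Fin (n + 1) → ℝ) y + (u - v) * t := by
  rw [Fin.cons_snoc_eq_snoc_cons, weightedMean_snoc, weightedMean_snoc]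
  simp only [Fin.sum_univ_succ, Fin.cons_zero, Fin.cons_succ]
  ring

lemma weightedMean_snoc_add_mul {n : ℕ} (u v : ℝ) (m y : Fin n → ℝ) :
    weightedMean (Fin.snoc m v : Fin (n + 1) → ℝ) y + (u - v) * (1 - ∑ i, y i) =
      weightedMean (Fin.snoc m u : Fin (n + 1) → ℝ) y := by
  simp only [weightedMean_snoc]
  ring

lemma feynmanIntegral_snoc_comp_perm {n : ℕ} (c : Fin n → ℝ) (v : ℝ) (π : Equiv.Perm (Fin n)) :
    feynmanIntegral (Fin.snoc (c ∘ π) v : Fin (n + 1) → ℝ) =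
      feynmanIntegral (Fin.snoc c v : Fin (n + 1) → ℝ) := by
  simp only [feynmanIntegral, weightedMean_snoc_comp_perm]
  exact setIntegral_simplex_comp_perm (fun x => weightedMean (Fin.snoc c v) x ^ _) π.symm

lemma feynmanIntegral_cons_snoc {n : ℕ} {u v : ℝ} {m : Fin n → ℝ} (hu : 0 < u) (hv : 0 < v)
    (hm : ∀ i, 0 < m i) (huv : u ≠ v) :
    feynmanIntegral (Fin.cons u (Fin.snoc m v) : Fin (n + 2) → ℝ) =
      (feynmanIntegral (Fin.snoc m v : Fin (n + 1) → ℝ) -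
        feynmanIntegral (Fin.snoc m u : Fin (n + 1) → ℝ)) / ((n + 1) * (u - v)) := by
  have hmu : ∀ i, 0 < (Fin.snoc m u : Fin (n + 1) → ℝ) i := by
    simp [Fin.forall_fin_succ', hm, hu]
  have hmv : ∀ i, 0 < (Fin.snoc m v : Fin (n + 1) → ℝ) i := by
    simp [Fin.forall_fin_succ', hm, hv]
  have hpos : ∀ i, 0 < (Fin.cons u (Fin.snoc m v) : Fin (n + 2) → ℝ) i := by
    simp [Fin.forall_fin_succ, hu, hmv]
  rw [feynmanIntegral, setIntegral_simplex_succ (integrableOn_weightedMean_zpow hpos _),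
    feynmanIntegral, feynmanIntegral, ← integral_sub (integrableOn_weightedMean_zpow hmv _)
      (integrableOn_weightedMean_zpow hmu _), ← integral_div]
  refine setIntegral_congr_fun (isClosed_simplex n).measurableSet fun y hy => ?_
  have hA := weightedMean_pos hmv hy
  have hAc := weightedMean_snoc_add_mul u v m y ▸ weightedMean_pos hmu hy
  simp only [weightedMean_cons_snoc]
  rw [integral_Icc_add_mul_zpow hA hAc (sub_ne_zero.2 huv) (one_sub_sum_nonneg hy) (by omega),
    weightedMean_snoc_add_mul]
  have hexp : -((n + 1 : ℕ) + 1 : ℤ) + 1 = -(n + 1) := by push_cast; ring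
  rw [hexp, ← neg_div_neg_eq, neg_sub]
  push_cast
  ring

lemma factorial_mul_feynmanIntegral_snoc_const (n : ℕ) {v : ℝ} (hv : 0 < v) :
    n ! * feynmanIntegral (Fin.snoc (fun _ => v) v : Fin (n + 1) → ℝ) =
      ((∏ _ : Fin n, v) * v)⁻¹ := by
  have hmean : ∀ x : Fin n → ℝ, weightedMean (Fin.snoc (fun _ => v) v : Fin (n + 1) → ℝ) x = v :=
    fun x => by rw [weightedMean_snoc, ← mul_sum]; ring
  simp only [feynmanIntegral, hmean, setIntegral_const, measureReal_simplex, smul_eq_mul,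
    Fin.prod_const, ← pow_succ, zpow_neg]
  have hfact := n.factorial_ne_zero
  field_simp
  norm_cast

lemma factorial_mul_feynmanIntegral_snoc_of_ne {n : ℕ}
    (ih : ∀ {c : Fin n → ℝ} {v : ℝ}, (∀ i, 0 < c i) → 0 < v →
      n ! * feynmanIntegral (Fin.snoc c v : Fin (n + 1) → ℝ) = ((∏ i, c i) * v)⁻¹)
    {d : Fin (n + 1) → ℝ} {v : ℝ} (hd : ∀ i, 0 < d i) (hv : 0 < v) (h0 : d 0 ≠ v) :
    (n + 1)! * feynmanIntegral (Fin.snoc d v : Fin (n + 2) → ℝ) = ((∏ i, d i) * v)⁻¹ := by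
  have htail : ∀ i, 0 < Fin.tail d i := fun i => hd _
  rw [← Fin.cons_self_tail d, ← Fin.cons_snoc_eq_snoc_cons,
    feynmanIntegral_cons_snoc (hd 0) hv htail h0, Fin.prod_cons]
  have hsub : d 0 - v ≠ 0 := sub_ne_zero.2 h0
  have hd0 := (hd 0).ne'
  calc _ = (n ! * feynmanIntegral (Fin.snoc (Fin.tail d) v : Fin (n + 1) → ℝ) -
        n ! * feynmanIntegral (Fin.snoc (Fin.tail d) (d 0) : Fin (n + 1) → ℝ)) / (d 0 - v) := by
        push_cast [Nat.factorial_succ]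
        field_simp
    _ = (((∏ i, Fin.tail d i) * v)⁻¹ - ((∏ i, Fin.tail d i) * d 0)⁻¹) / (d 0 - v) := by
        rw [ih htail hv, ih htail (hd 0)]
    _ = _ := by field_simp

theorem factorial_mul_feynmanIntegral_snoc (n : ℕ) {c : Fin n → ℝ} {v : ℝ}
    (hc : ∀ i, 0 < c i) (hv : 0 < v) :
    n ! * feynmanIntegral (Fin.snoc c v : Fin (n + 1) → ℝ) = ((∏ i, c i) * v)⁻¹ := by
  induction n generalizing v with
  | zero =>
    rw [Subsingleton.elim c fun _ => v]
    exact factorial_mul_feynmanIntegral_snoc_const 0 hv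
  | succ n ih =>
    by_cases hconst : ∀ j, c j = v
    · rw [show c = fun _ => v from funext hconst]
      exact factorial_mul_feynmanIntegral_snoc_const _ hv
    obtain ⟨j, hj⟩ := not_forall.1 hconst
    have hswap := factorial_mul_feynmanIntegral_snoc_of_ne ih (d := c ∘ Equiv.swap 0 j)
      (fun i => hc _) hv (by simpa using hj)
    rwa [feynmanIntegral_snoc_comp_perm, Function.comp_def, Equiv.prod_comp] at hswap

end Feynman

/-- Feynman parameterization: for positive reals `a₁, …, a_n` (here `n = k + 2 ≥ 2`),
`1/(a₁⋯a_n) = (n−1)! ∫_T (Σ_{i<n} a_i x_i + a_n(1 − Σ_{i<n} x_i))^{−n} dx`, the integral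
taken over the standard simplex `T ⊆ ℝ^{n−1}` with respect to Lebesgue measure. -/
theorem stmt14 (k : ℕ) (a : Fin (k + 2) → ℝ) (ha : ∀ i, 0 < a i) :
    1 / (∏ i, a i)
      = (Nat.factorial (k + 1) : ℝ) *
        ∫ x in {x : Fin (k + 1) → ℝ | (∀ i, 0 ≤ x i) ∧ (∑ i, x i) ≤ 1},
          ((∑ i : Fin (k + 1), a i.castSucc * x i)
            + a (Fin.last (k + 1)) * (1 - ∑ i, x i)) ^ (-(k + 2 : ℤ)) := by
  have h := Feynman.factorial_mul_feynmanIntegral_snoc (k + 1) (c := Fin.init a) (fun i => ha _)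
    (ha (Fin.last _))
  rw [Fin.snoc_init_self] at h
  have hexp : -(k + 2 : ℤ) = -((k + 1 : ℕ) + 1 : ℤ) := by push_cast; ring
  rw [hexp, one_div, Fin.prod_univ_castSucc]
  exact h.symm
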